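/- The inverse map I^{-1} is a two-sided inverse to I: for every nice n-expression s, I^{-1}(I(s)) = s, and for every forest-tree-forest triple (F,T,G) with n total leaves, I(I^{-1}(F,T,G)) = (F,T,G). -/

import Mathlib

/-- `IsNice n l ss` says that the list of stretches `ss = [s_0, ..., s_k]`
together with the distinguished index `l` forms a nice `n`-expression:
each stretch is a nonempty subset of `{0,...,n}`, `max s_i = min s_{i+1}`,
`|s_i| ≥ 2` for `i ≠ l`, `min s_0 = 0` and `max s_k = n`. -/
def IsNice (n l : ℕ) (ss : List (Finset ℕ)) : Prop :=
  ss ≠ [] ∧ l < ss.length ∧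
  (∀ s ∈ ss, s.Nonempty) ∧
  (∀ s ∈ ss, s ⊆ Finset.range (n + 1)) ∧
  (∀ i, i + 1 < ss.length →
    ∃ m, m ∈ ss.getD i ∅ ∧ m ∈ ss.getD (i + 1) ∅ ∧
      (∀ x ∈ ss.getD i ∅, x ≤ m) ∧ (∀ x ∈ ss.getD (i + 1) ∅, m ≤ x)) ∧
  (∀ i < ss.length, i ≠ l → 2 ≤ (ss.getD i ∅).card) ∧
  (0 ∈ ss.getD 0 ∅) ∧ (n ∈ ss.getD (ss.length - 1) ∅)

/-- Union of all stretches of a nice expression. -/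
def stretchUnion (ss : List (Finset ℕ)) : Finset ℕ := ss.foldr (· ∪ ·) ∅

/-- Codimension of a nice `n`-expression: `l` plus the number of elements of
`{0,...,n}` missing from the union of the stretches. -/
def codim (n l : ℕ) (ss : List (Finset ℕ)) : ℕ :=
  l + (Finset.range (n + 1) \ stretchUnion ss).card

/-- A possibly empty short forest: each tree is a nonempty list of branches
with positive leaf counts. -/
def IsForest (F : List (List ℕ)) : Prop := ∀ t ∈ F, t ≠ [] ∧ ∀ b ∈ t, 1 ≤ b

/-- A possibly empty depth-2 tree: a list of positive branch leaf counts. -/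
def IsTree (t : List ℕ) : Prop := ∀ b ∈ t, 1 ≤ b

/-- Total leaves of a forest. -/
def forestLeaves (F : List (List ℕ)) : ℕ := (F.map List.sum).sum

/-- Total leaves of a forest-tree-forest triple `(F, T, G)`. -/
def tripleLeaves (x : List (List ℕ) × List ℕ × List (List ℕ)) : ℕ :=
  forestLeaves x.1 + x.2.1.sum + forestLeaves x.2.2

/-- A forest-tree-forest triple with `n` leaves in total. -/
def IsTriple (n : ℕ) (x : List (List ℕ) × List ℕ × List (List ℕ)) : Prop :=
  IsForest x.1 ∧ IsTree x.2.1 ∧ IsForest x.2.2 ∧ tripleLeaves x = n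

/-- Consecutive differences of a list. -/
def diffs (L : List ℕ) : List ℕ := List.zipWith (fun a b => b - a) L L.tail

/-- The tree `ι(s)` of a stretch `s = {a_1 < ... < a_m}`: it has `m - 1`
branches, branch `j` carrying `a_{j+1} - a_j` leaves. -/
def iota (s : Finset ℕ) : List ℕ := diffs (s.sort (· ≤ ·))

/-- The map `I`, sending a nice expression `(l, [s_0, ..., s_k])` to the triple
`(ι(s_k) ∘ ... ∘ ι(s_{l+1}), ι(s_l), ι(s_{l-1}) ∘ ... ∘ ι(s_0))`. -/
def Ifun (p : ℕ × List (Finset ℕ)) : List (List ℕ) × List ℕ × List (List ℕ) :=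
  ((p.2.drop (p.1 + 1)).reverse.map iota,
   iota (p.2.getD p.1 ∅),
   (p.2.take p.1).reverse.map iota)

/-- Rebuild the stretches from a list of trees: starting at the running value
`a`, each tree contributes the stretch of its cumulative leaf counts
(partial sums), consecutive stretches sharing their boundary value. -/
def buildStretches : ℕ → List (List ℕ) → List (Finset ℕ)
  | _, [] => []
  | a, t :: rest => (List.scanl (· + ·) a t).toFinset :: buildStretches (a + t.sum) rest

/-- The inverse map `I⁻¹`: trees of `G` (read right to left) give
`s_0, ..., s_{l-1}`, the middle tree gives `s_l`, and trees of `F`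
(read right to left) give `s_{l+1}, ..., s_k`; the bar position is
`l = ` (number of trees of `G`). -/
def Iinv (x : List (List ℕ) × List ℕ × List (List ℕ)) : ℕ × List (Finset ℕ) :=
  (x.2.2.length, buildStretches 0 (x.2.2.reverse ++ ([x.2.1] ++ x.1.reverse)))

lemma diffs_cons_cons (x y : ℕ) (L : List ℕ) :
    diffs (x :: y :: L) = (y - x) :: diffs (y :: L) := rfl

lemma diffs_scanl (t : List ℕ) : ∀ a, diffs (List.scanl (·+·) a t) = t := by
  induction t with
  | nil => intro a; rfl
  | cons b t ih =>
    intro a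
    cases t with
    | nil => simp [diffs, List.scanl]
    | cons c t' =>
      rw [List.scanl_cons, List.scanl_cons, diffs_cons_cons, ← List.scanl_cons, ih]
      simp

lemma scanl_chain' (t : List ℕ) (h : ∀ b ∈ t, 1 ≤ b) :
    ∀ a, (List.scanl (·+·) a t).Chain' (· < ·) := by
  induction t with
  | nil => intro a; simp [List.scanl]; exact List.isChain_singleton a
  | cons b t ih =>
    intro a
    rw [List.scanl_cons]
    refine List.IsChain.cons (ih (fun x hx => h x (by simp [hx])) (a+b)) ?_
    intro y hy
    have : (List.scanl (·+·) (a+b) t).head? = some (a+b) := by cases t <;> simp [List.scanl_cons, List.scanl_nil]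
    rw [this] at hy
    cases hy
    have := h b (by simp)
    omega

lemma scanl_sorted (t : List ℕ) (h : ∀ b ∈ t, 1 ≤ b) (a : ℕ) :
    (List.scanl (·+·) a t).Pairwise (· < ·) :=
  List.isChain_iff_pairwise.mp (scanl_chain' t h a)

lemma sort_scanl (t : List ℕ) (h : ∀ b ∈ t, 1 ≤ b) (a : ℕ) :
    ((List.scanl (·+·) a t).toFinset).sort (· ≤ ·) = List.scanl (·+·) a t := by
  have hs := scanl_sorted t h a
  exact (List.toFinset_sort (· ≤ ·) hs.nodup).mpr (hs.imp le_of_lt)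

lemma iota_scanl (t : List ℕ) (h : ∀ b ∈ t, 1 ≤ b) (a : ℕ) :
    iota ((List.scanl (·+·) a t).toFinset) = t := by
  rw [iota, sort_scanl t h a, diffs_scanl]

lemma map_iota_buildStretches : ∀ (L : List (List ℕ)) (a : ℕ),
    (∀ t ∈ L, ∀ b ∈ t, 1 ≤ b) → (buildStretches a L).map iota = L := by
  intro L
  induction L with
  | nil => intro a _; rfl
  | cons t L ih =>
    intro a h
    rw [buildStretches, List.map_cons, iota_scanl t (h t (by simp)) a,
      ih _ (fun u hu => h u (by simp [hu]))]

lemma buildStretches_append : ∀ (L1 : List (List ℕ)) (a : ℕ) (L2 : List (List ℕ)),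
    buildStretches a (L1 ++ L2)
      = buildStretches a L1 ++ buildStretches (a + (L1.map List.sum).sum) L2 := by
  intro L1
  induction L1 with
  | nil => intro a L2; simp [buildStretches]
  | cons t L1 ih => intro a L2; simp [buildStretches, ih, Nat.add_assoc]

lemma buildStretches_length : ∀ (L : List (List ℕ)) (a : ℕ),
    (buildStretches a L).length = L.length := by
  intro L
  induction L with
  | nil => intro a; rfl
  | cons t L ih => intro a; simp [buildStretches, ih]

lemma scanl_diffs : ∀ (M : List ℕ) (a : ℕ), (a :: M).Chain' (· ≤ ·) →
    List.scanl (·+·) a (diffs (a :: M)) = a :: M := by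
  intro M
  induction M with
  | nil => intro a _; rfl
  | cons y M ih =>
    intro a h
    unfold List.Chain' at h
    rw [List.isChain_cons_cons] at h
    rw [diffs_cons_cons, List.scanl_cons, Nat.add_sub_cancel' h.1, ih y h.2]

lemma scanl_iota (s : Finset ℕ) (a : ℕ) (ha : a ∈ s) (hmin : ∀ x ∈ s, a ≤ x) :
    List.scanl (·+·) a (iota s) = s.sort (· ≤ ·) := by
  obtain ⟨b, M, hb⟩ : ∃ b M, s.sort (· ≤ ·) = b :: M := by
    cases hs : s.sort (· ≤ ·) with
    | nil => exact absurd ((Finset.mem_sort _).mpr ha) (hs ▸ List.not_mem_nil (a := a))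
    | cons b M => exact ⟨b, M, rfl⟩
  have hsort : (s.sort (· ≤ ·)).Pairwise (· ≤ ·) := Finset.pairwise_sort _ _
  have hab : a = b := by
    have hbs : b ∈ s := (Finset.mem_sort (α := ℕ) (· ≤ ·)).mp (by simp [hb])
    have has : a ∈ s.sort (· ≤ ·) := (Finset.mem_sort _).mpr ha
    rw [hb] at has hsort
    rcases List.mem_cons.mp has with h | h
    · exact h
    · exact le_antisymm (hmin b hbs) (List.rel_of_pairwise_cons hsort h)
  subst hab
  rw [iota, hb]
  exact scanl_diffs M a (by rw [← hb]; exact hsort.isChain)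

lemma mem_scanl_last : ∀ (t : List ℕ) (a : ℕ), a + t.sum ∈ List.scanl (·+·) a t := by
  intro t
  induction t with
  | nil => intro a; simp [List.scanl]
  | cons b t ih =>
    intro a
    rw [List.scanl_cons, List.sum_cons, ← Nat.add_assoc]
    exact List.mem_cons_of_mem _ (ih (a+b))

lemma le_of_mem_scanl : ∀ (t : List ℕ) (a x : ℕ), x ∈ List.scanl (·+·) a t → x ≤ a + t.sum := by
  intro t
  induction t with
  | nil => intro a x hx; simp [List.scanl] at hx; omega
  | cons b t ih =>
    intro a x hx
    rw [List.scanl_cons] at hx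
    rcases List.mem_cons.mp hx with h | h
    · omega
    · have := ih (a+b) x h; rw [List.sum_cons]; omega

def StretchRel (s t : Finset ℕ) : Prop :=
  ∃ m, m ∈ s ∧ m ∈ t ∧ (∀ x ∈ s, x ≤ m) ∧ ∀ x ∈ t, m ≤ x

lemma build_map_iota : ∀ (ss : List (Finset ℕ)) (a : ℕ),
    (∀ s ∈ ss, s.Nonempty) → ss.Chain' StretchRel →
    (∀ s ∈ ss.head?, a ∈ s ∧ ∀ x ∈ s, a ≤ x) →
    buildStretches a (ss.map iota) = ss := by
  intro ss
  induction ss with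
  | nil => intro a _ _ _; rfl
  | cons s rest ih =>
    intro a hne hch hh
    obtain ⟨ha, hmin⟩ := hh s rfl
    have hsc : List.scanl (·+·) a (iota s) = s.sort (· ≤ ·) := scanl_iota s a ha hmin
    rw [List.map_cons, buildStretches, hsc, Finset.sort_toFinset]
    congr 1
    set a' := a + (iota s).sum with ha'
    have ha's : a' ∈ s := by
      have := mem_scanl_last (iota s) a
      rw [hsc, Finset.mem_sort] at this
      exact this
    apply ih a' (fun u hu => hne u (by simp [hu])) hch.tail
    intro t ht
    cases rest with
    | nil => simp at ht
    | cons t' rest' =>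
      cases ht
      obtain ⟨m, hms, hmt, hmax, hmin'⟩ := List.isChain_cons_cons.mp hch |>.1
      have hma' : m = a' := by
        have h1 : a' ≤ m := hmax a' ha's
        have h2 : m ≤ a' := by
          have : m ∈ List.scanl (·+·) a (iota s) := by
            rw [hsc, Finset.mem_sort]; exact hms
          exact le_of_mem_scanl _ _ _ this
        omega
      exact ⟨hma' ▸ hmt, fun x hx => hma' ▸ hmin' x hx⟩

/-- `I⁻¹` is a two-sided inverse to `I`: `I⁻¹(I(s)) = s` for every nice
`n`-expression `s`, and `I(I⁻¹(F,T,G)) = (F,T,G)` for every forest-tree-forest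
triple with `n` total leaves. -/
theorem Iinv_two_sided_inverse :
    (∀ (n l : ℕ) (ss : List (Finset ℕ)), IsNice n l ss →
      Iinv (Ifun (l, ss)) = (l, ss)) ∧
    (∀ (n : ℕ) (x : List (List ℕ) × List ℕ × List (List ℕ)), IsTriple n x →
      Ifun (Iinv x) = x) := by
  constructor
  · intro n l ss hnice
    obtain ⟨hne, hl, hnon, -, hchain, -, h0, -⟩ := hnice
    have hdecomp : ss.take l ++ (ss.getD l ∅ :: ss.drop (l+1)) = ss := by
      rw [List.getD_eq_getElem ss ∅ hl, ← List.drop_eq_getElem_cons hl,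
        List.take_append_drop]
    have key : buildStretches 0 (ss.map iota) = ss := by
      apply build_map_iota ss 0 hnon
      · unfold List.Chain'
        rw [List.isChain_iff_getElem]
        intro i hi
        obtain ⟨m, h1, h2, h3, h4⟩ := hchain i (by omega)
        simp only [List.getD_eq_getElem ss ∅ (show i < ss.length by omega),
          List.getD_eq_getElem ss ∅ (show i + 1 < ss.length by omega)] at h1 h2 h3 h4
        exact ⟨m, h1, h2, h3, h4⟩
      · intro s hs
        have h0lt : 0 < ss.length := List.length_pos_iff.mpr hne
        have : ss.head? = some ss[0] := List.head?_eq_getElem? (l := ss) ▸ by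
          simp [List.getElem?_eq_getElem h0lt]
        rw [this] at hs
        cases hs
        rw [List.getD_eq_getElem ss ∅ h0lt] at h0
        exact ⟨h0, fun x _ => Nat.zero_le x⟩
    rw [Prod.ext_iff]
    constructor
    · simp only [Iinv, Ifun, List.length_map, List.length_reverse, List.length_take]
      omega
    · simp only [Iinv, Ifun]
      rw [← List.map_reverse, ← List.map_reverse, List.reverse_reverse,
        List.reverse_reverse, List.singleton_append, ← List.map_cons,
        ← List.map_append, hdecomp, key]
  · intro n x hx
    obtain ⟨F, T, G⟩ := x
    obtain ⟨hF, hT, hG, -⟩ := hx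
    have hGrev : ∀ t ∈ G.reverse, ∀ b ∈ t, 1 ≤ b :=
      fun t ht => (hG t (List.mem_reverse.mp ht)).2
    have hFrev : ∀ t ∈ F.reverse, ∀ b ∈ t, 1 ≤ b :=
      fun t ht => (hF t (List.mem_reverse.mp ht)).2
    set a1 := 0 + (G.reverse.map List.sum).sum with ha1
    set BA := buildStretches 0 G.reverse with hBA
    set BT := (List.scanl (· + ·) a1 T).toFinset with hBT
    set BF := buildStretches (a1 + T.sum) F.reverse with hBF
    have hS : buildStretches 0 (G.reverse ++ ([T] ++ F.reverse)) = BA ++ (BT :: BF) := by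
      rw [buildStretches_append, ← ha1, ← hBA]
      rfl
    have hlenBA : BA.length = G.length := by
      rw [hBA, buildStretches_length, List.length_reverse]
    simp only [Iinv, Ifun, hS]
    refine Prod.ext ?_ (Prod.ext ?_ ?_)
    · show ((BA ++ (BT :: BF)).drop (G.length + 1)).reverse.map iota = F
      have : BA ++ (BT :: BF) = (BA ++ [BT]) ++ BF := by simp
      rw [this, List.drop_left' (by simp [hlenBA]), List.map_reverse, hBF,
        map_iota_buildStretches F.reverse _ hFrev, List.reverse_reverse]
    · show iota ((BA ++ (BT :: BF)).getD G.length ∅) = T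
      rw [List.getD_append_right _ _ _ _ (le_of_eq hlenBA), hlenBA, Nat.sub_self]
      exact iota_scanl T hT a1
    · show ((BA ++ (BT :: BF)).take G.length).reverse.map iota = G
      rw [List.take_left' hlenBA, hBA, List.map_reverse,
        map_iota_buildStretches G.reverse _ hGrev, List.reverse_reverse]
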